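/- The function F : (0, 1) → ℝ defined by F(t) = ∑_{k ∈ ℤ} (−1)^k · exp(−t π² k² / 8) is monotone nondecreasing on the interval (0, 1). -/

import Mathlib

/-!
By Poisson summation, `∑ (-1)^k e^{-π a k²} = a^{-1/2} ∑ e^{-π (n - 1/2)² / a}`; with `a = π t / 8`
this writes `F(t)` as a sum of terms `a^{-1/2} e^{-c/a}` with `c = π (n - 1/2)² ≥ π / 4`. Each of
these is increasing for `a ≤ 2c`, hence on the whole range `a ≤ π / 8` coming from `t < 1`.
-/

open Real Set

theorem monotoneOn_neg_div_sub_log_div_two (c : ℝ) :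
    MonotoneOn (fun t => -c / t - log t / 2) (Ioc 0 (2 * c)) := by
  rintro s ⟨hs, -⟩ t ⟨ht, htc⟩ hst
  have hlog : log t - log s ≤ (t - s) / s := by
    rw [← log_div ht.ne' hs.ne', sub_div, div_self hs.ne']
    exact log_le_sub_one_of_pos (div_pos ht hs)
  have hlin : (t - s) / s ≤ 2 * (c / s - c / t) := by
    rw [div_sub_div _ _ hs.ne' ht.ne', ← mul_div_assoc, div_le_div_iff₀ hs (mul_pos hs ht)]
    nlinarith [mul_nonneg (sub_nonneg.2 hst) hs.le]
  simp only [neg_div]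
  linarith

theorem monotoneOn_exp_neg_div_div_sqrt (c : ℝ) :
    MonotoneOn (fun t => exp (-c / t) / √t) (Ioc 0 (2 * c)) := by
  have h : EqOn (fun t => exp (-c / t) / √t) (fun t => exp (-c / t - log t / 2))
      (Ioc 0 (2 * c)) := by
    rintro t ⟨ht, -⟩
    simp only
    rw [sqrt_eq_rpow, rpow_def_of_pos ht, exp_sub]
    ring_nf
  exact (exp_monotone.comp_monotoneOn (monotoneOn_neg_div_sub_log_div_two c)).congr h.symm

theorem summable_exp_neg_mul_int_sub_sq {b : ℝ} (hb : 0 < b) (c : ℝ) :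
    Summable fun n : ℤ => exp (-b * (n - c) ^ 2) := by
  refine .of_nonneg_of_le (fun _ => (exp_pos _).le) (fun n => ?_)
    (by simpa using summable_pow_mul_jacobiTheta₂_term_bound (b * |c| / π) (div_pos hb pi_pos) 0)
  rw [exp_le_exp, show -(π * (b / π * n ^ 2 - 2 * (b * |c| / π) * |(n : ℝ)|))
    = -b * n ^ 2 + 2 * b * (|c| * |(n : ℝ)|) by field_simp; ring]
  nlinarith [mul_le_mul_of_nonneg_left (le_abs_self (c * n)) hb.le, abs_mul c n,
    mul_nonneg hb.le (sq_nonneg c)]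

theorem tsum_neg_one_zpow_mul_exp_neg_mul_int_sq {a : ℝ} (ha : 0 < a) :
    ∑' n : ℤ, (-1 : ℝ) ^ n * exp (-π * a * n ^ 2) =
      (∑' n : ℤ, exp (-π / a * (n - 1 / 2) ^ 2)) / √a := by
  -- The linear coefficient `b = i/2` turns `e^{2πibn}` into `(-1)^n` and shifts `n` by `-1/2`.
  have H := Complex.tsum_exp_neg_quadratic (by rwa [Complex.ofReal_re] : 0 < (a : ℂ).re)
    (Complex.I / 2)
  have hsign (n : ℤ) : Complex.exp (2 * π * (Complex.I / 2) * n) = (-1) ^ n := by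
    rw [show 2 * π * (Complex.I / 2) * n = n * (π * Complex.I) by ring, Complex.exp_int_mul,
      Complex.exp_pi_mul_I]
  have hshift (n : ℤ) : (n : ℂ) + Complex.I * (Complex.I / 2) = ((n - 1 / 2 : ℝ) : ℂ) := by
    rw [← mul_div_assoc, Complex.I_mul_I]
    push_cast
    ring
  simp_rw [Complex.exp_add, hsign, hshift] at H
  apply Complex.ofReal_injective
  rw [sqrt_eq_rpow, div_eq_inv_mul]
  push_cast [Complex.ofReal_cpow ha.le]
  convert H using 1
  · exact tsum_congr fun n => mul_comm _ _
  · push_cast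
    ring

theorem one_quarter_le_sq_intCast_sub_half (n : ℤ) : 1 / 4 ≤ ((n : ℝ) - 1 / 2) ^ 2 := by
  have : (n : ℝ) ≤ n ^ 2 := by exact_mod_cast Int.le_self_sq n
  nlinarith

theorem monotoneOn_tsum_exp_neg_div_mul_int_sub_half_sq_div_sqrt :
    MonotoneOn (fun a : ℝ => (∑' n : ℤ, exp (-π / a * (n - 1 / 2) ^ 2)) / √a)
      (Ioc 0 (π / 2)) := by
  intro s hs t ht hst
  have hsum : ∀ a ∈ Ioc 0 (π / 2),
      Summable fun n : ℤ => exp (-π / a * (n - 1 / 2) ^ 2) / √a := fun a ha => by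
    simpa only [neg_div] using
      (summable_exp_neg_mul_int_sub_sq (div_pos pi_pos ha.1) _).div_const _
  simp only [← tsum_div_const]
  refine (hsum s hs).tsum_le_tsum (fun n => ?_) (hsum t ht)
  have hc : π / 2 ≤ 2 * (π * (n - 1 / 2) ^ 2) := by
    nlinarith [one_quarter_le_sq_intCast_sub_half n, pi_pos]
  have := monotoneOn_exp_neg_div_div_sqrt (π * (n - 1 / 2) ^ 2)
    ⟨hs.1, hs.2.trans hc⟩ ⟨ht.1, ht.2.trans hc⟩ hst
  simpa only [neg_div, neg_mul, div_mul_eq_mul_div] using this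

/-- The function `F(t) = ∑_{k∈ℤ} (−1)^k e^{−tπ²k²/8}` is nondecreasing on `(0,1)`. -/
theorem stmt_12 :
    MonotoneOn
      (fun t : ℝ => ∑' k : ℤ, (-1 : ℝ) ^ k * Real.exp (-t * Real.pi ^ 2 * (k : ℝ) ^ 2 / 8))
      (Set.Ioo (0 : ℝ) 1) := by
  have hF : EqOn
      (fun t : ℝ => ∑' k : ℤ, (-1 : ℝ) ^ k * Real.exp (-t * Real.pi ^ 2 * (k : ℝ) ^ 2 / 8))
      ((fun a : ℝ => (∑' n : ℤ, exp (-π / a * (n - 1 / 2) ^ 2)) / √a) ∘ fun t => π * t / 8)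
      (Ioo 0 1) := by
    intro t ht
    rw [Function.comp_apply,
      ← tsum_neg_one_zpow_mul_exp_neg_mul_int_sq (by nlinarith [ht.1, pi_pos])]
    exact tsum_congr fun k => by ring_nf
  refine MonotoneOn.congr ?_ hF.symm
  exact monotoneOn_tsum_exp_neg_div_mul_int_sub_half_sq_div_sqrt.comp
    (fun s _ t _ hst => by gcongr)
    fun t ht => ⟨by nlinarith [ht.1, pi_pos], by nlinarith [ht.2, pi_pos]⟩
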